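/- arXiv:1601.01816 — 4 statements merged into one kernel-verified Lean document; each statement's English description precedes it below -/
import Mathlib

section
/- Let S0 and S1 be nonempty finite subsets of ℝ² in general position such that the convex hull of S0 is contained in the convex hull of S1. Then there is no outer common tangent of S0 and S1. -/
/-- Finite sets `S0, S1 ⊆ ℝ²` are in *general position* if they are disjoint
and no three distinct points of `S0 ∪ S1` are collinear. -/
def InGeneralPosition (S0 S1 : Set (ℝ × ℝ)) : Prop :=
  S0 ∩ S1 = ∅ ∧
    ∀ a ∈ S0 ∪ S1, ∀ b ∈ S0 ∪ S1, ∀ c ∈ S0 ∪ S1,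
      a ≠ b → a ≠ c → b ≠ c → ¬ Collinear ℝ ({a, b, c} : Set (ℝ × ℝ))

/-- The line `{x | f x = c}` is an *outer common tangent* of `S0` and `S1` if
it intersects the convex hulls of both sets and `S0 ∪ S1` is contained in one
of the two closed half-planes of the line. -/
def IsOuterCommonTangent (f : ℝ × ℝ →ₗ[ℝ] ℝ) (c : ℝ) (S0 S1 : Set (ℝ × ℝ)) : Prop :=
  ({x | f x = c} ∩ convexHull ℝ S0).Nonempty ∧
  ({x | f x = c} ∩ convexHull ℝ S1).Nonempty ∧
    (S0 ∪ S1 ⊆ {x | f x ≤ c} ∨ S0 ∪ S1 ⊆ {x | c ≤ f x})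

/-! A line supporting `S0 ∪ S1` that meets `convexHull S0` must pass through a point `a ∈ S0`, and
then `a ∈ convexHull S1` lies in the convex hull of the points of `S1` on that line. By general
position the line carries at most one point of `S1`, so `a` would be that point, contradicting
`S0 ∩ S1 = ∅`. -/

open Module

theorem collinear_of_subset_setOf_apply_eq {K V : Type*} [Field K] [AddCommGroup V] [Module K V]
    [FiniteDimensional K V] (hV : finrank K V = 2) {f : V →ₗ[K] K} (hf : f ≠ 0) {c : K}
    {s : Set V} (hs : s ⊆ {x | f x = c}) : Collinear K s := by
  have hspan : vectorSpan K s ≤ LinearMap.ker f := by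
    rw [vectorSpan_def, Submodule.span_le]
    rintro _ ⟨p, hp, q, hq, rfl⟩
    change f (p - q) = 0
    rw [map_sub, hs hp, hs hq, sub_self]
  have hker := Dual.finrank_ker_add_one_of_ne_zero hf
  rw [collinear_iff_finrank_le_one]
  have := Submodule.finrank_mono hspan
  omega

/- The set `{f < c} ∪ convexHull {s ∈ S | f s = c}` is convex and contains `S`, so it contains
`convexHull S`; a point of it on the line `f = c` must lie in the second part. -/
theorem mem_convexHull_sep_of_le {𝕜 E : Type*} [Field 𝕜] [LinearOrder 𝕜] [IsStrictOrderedRing 𝕜]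
    [AddCommGroup E] [Module 𝕜 E] {S : Set E} {f : E →ₗ[𝕜] 𝕜} {c : 𝕜}
    (hS : ∀ s ∈ S, f s ≤ c) {x : E} (hx : x ∈ convexHull 𝕜 S) (hxc : f x = c) :
    x ∈ convexHull 𝕜 {s ∈ S | f s = c} := by
  set F := convexHull 𝕜 {s ∈ S | f s = c}
  have hF : F ⊆ {y | f y = c} := convexHull_min (fun s hs => hs.2) (convex_hyperplane f.isLinear c)
  have hle : ∀ y ∈ {y | f y < c} ∪ F, f y ≤ c := by
    rintro y (hy | hy)
    exacts [le_of_lt hy, (hF hy).le]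
  have hconv : Convex 𝕜 ({y | f y < c} ∪ F) := by
    refine convex_iff_forall_pos.2 fun y hy z hz a b ha hb hab => ?_
    by_cases hyz : y ∈ F ∧ z ∈ F
    · exact Or.inr (convex_convexHull 𝕜 _ hyz.1 hyz.2 ha.le hb.le hab)
    · have hlt : f y < c ∨ f z < c := by
        rcases hy with hy | hy <;> rcases hz with hz | hz <;> tauto
      left
      show f (a • y + b • z) < c
      rw [map_add, map_smul, map_smul, smul_eq_mul, smul_eq_mul]
      have hc : a * c + b * c = c := by rw [← add_mul, hab, one_mul]
      rcases hlt with hlt | hlt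
      · linarith [mul_lt_mul_of_pos_left hlt ha, mul_le_mul_of_nonneg_left (hle z hz) hb.le]
      · linarith [mul_lt_mul_of_pos_left hlt hb, mul_le_mul_of_nonneg_left (hle y hy) ha.le]
  have hsub : convexHull 𝕜 S ⊆ {y | f y < c} ∪ F :=
    convexHull_min (fun s hs => (hS s hs).lt_or_eq.imp id fun h => subset_convexHull 𝕜 _ ⟨hs, h⟩)
      hconv
  exact (hsub hx).resolve_left hxc.not_lt

theorem InGeneralPosition.notMem_right {S0 S1 : Set (ℝ × ℝ)} (hgen : InGeneralPosition S0 S1)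
    {a : ℝ × ℝ} (ha : a ∈ S0) : a ∉ S1 :=
  Set.disjoint_left.1 (Set.disjoint_iff_inter_eq_empty.2 hgen.1) ha

theorem InGeneralPosition.subsingleton_sep_of_apply_eq {S0 S1 : Set (ℝ × ℝ)}
    (hgen : InGeneralPosition S0 S1) {f : ℝ × ℝ →ₗ[ℝ] ℝ} (hf : f ≠ 0) {c : ℝ} {a : ℝ × ℝ}
    (ha : a ∈ S0) (hac : f a = c) : {s ∈ S1 | f s = c}.Subsingleton := by
  intro b hb b' hb'
  by_contra hne
  refine hgen.2 a (.inl ha) b (.inr hb.1) b' (.inr hb'.1)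
    (fun hab => hgen.notMem_right ha (hab ▸ hb.1)) (fun hab => hgen.notMem_right ha (hab ▸ hb'.1))
    hne ?_
  refine collinear_of_subset_setOf_apply_eq (c := c) (by simp) hf ?_
  rintro _ (rfl | rfl | rfl)
  exacts [hac, hb.2, hb'.2]

theorem InGeneralPosition.apply_ne_of_nested {S0 S1 : Set (ℝ × ℝ)}
    (hgen : InGeneralPosition S0 S1) (hnested : convexHull ℝ S0 ⊆ convexHull ℝ S1)
    {f : ℝ × ℝ →ₗ[ℝ] ℝ} (hf : f ≠ 0) {c : ℝ} (hle : ∀ s ∈ S0 ∪ S1, f s ≤ c) {x : ℝ × ℝ}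
    (hx : x ∈ convexHull ℝ S0) : f x ≠ c := by
  intro hxc
  obtain ⟨a, ⟨ha, hac⟩⟩ : {s ∈ S0 | f s = c}.Nonempty :=
    convexHull_nonempty_iff.1 ⟨x, mem_convexHull_sep_of_le (fun s hs => hle s (.inl hs)) hx hxc⟩
  have haT : a ∈ convexHull ℝ {s ∈ S1 | f s = c} :=
    mem_convexHull_sep_of_le (fun s hs => hle s (.inr hs)) (hnested (subset_convexHull ℝ S0 ha)) hac
  rw [(hgen.subsingleton_sep_of_apply_eq hf ha hac).convex.convexHull_eq] at haT
  exact hgen.notMem_right ha haT.1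

theorem no_outerCommonTangent_of_nested_general (S0 S1 : Set (ℝ × ℝ))
    (hgen : InGeneralPosition S0 S1)
    (hnested : convexHull ℝ S0 ⊆ convexHull ℝ S1) :
    ¬ ∃ (f : ℝ × ℝ →ₗ[ℝ] ℝ) (c : ℝ), f ≠ 0 ∧ IsOuterCommonTangent f c S0 S1 := by
  rintro ⟨f, c, hf, ⟨x, hxc, hx⟩, -, hside | hside⟩
  · exact hgen.apply_ne_of_nested hnested hf (fun s hs => hside hs) hx hxc
  · exact hgen.apply_ne_of_nested hnested (neg_ne_zero.2 hf) (fun s hs => neg_le_neg (hside hs))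
      hx (congrArg Neg.neg hxc)

/-- If the convex hull of `S0` is contained in the convex hull of `S1`
(for nonempty finite sets in general position), then there is no outer
common tangent of `S0` and `S1`. -/
theorem no_outerCommonTangent_of_nested (S0 S1 : Set (ℝ × ℝ))
    (h0fin : S0.Finite) (h1fin : S1.Finite)
    (h0ne : S0.Nonempty) (h1ne : S1.Nonempty)
    (hgen : InGeneralPosition S0 S1)
    (hnested : convexHull ℝ S0 ⊆ convexHull ℝ S1) :
    ¬ ∃ (f : ℝ × ℝ →ₗ[ℝ] ℝ) (c : ℝ), f ≠ 0 ∧ IsOuterCommonTangent f c S0 S1 :=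
  no_outerCommonTangent_of_nested_general S0 S1 hgen hnested
end

section
/- Let S0 and S1 be nonempty finite subsets of ℝ² in general position such that S0 ∪ S1 has at least 3 elements, the convex hull of S0 is not contained in the convex hull of S1, and the convex hull of S1 is not contained in the convex hull of S0. Then there exist r0 ∈ S0 and r1 ∈ S1 such that every point of S0 ∪ S1 lies weakly to the right of the directed line from r0 to r1, and there exist ℓ0 ∈ S0 and ℓ1 ∈ S1 such that every point of S0 ∪ S1 lies weakly to the left of the directed line from ℓ0 to ℓ1; moreover (r0, r1) ≠ (ℓ0, ℓ1), so the two corresponding tangent lines are distinct. -/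
/-!
Rotate the direction `u(θ) = (cos θ, sin θ)` and compare the support functions
`h₀(θ) = max_{S0} ⟪u(θ), ·⟫` and `h₁(θ) = max_{S1} ⟪u(θ), ·⟫`. Separating a point of one hull from
the other hull gives a direction with `h₀ > h₁` and one with `h₀ < h₁`, so the continuous
`2π`-periodic function `h₀ - h₁` has a zero `θ` right after which it is negative. The maximisers
`a ∈ S0` and `b ∈ S1` at `θ` span a supporting line of `S0 ∪ S1`; if the points lay on its right,
`a` would overtake `S1` just after `θ`, so they lie on its left. Exchanging `S0` and `S1` gives the
right tangent, and the two tangents differ since by general position no third point lies on both.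
-/

/-- `det (b − a, p − a)`: positive iff `p` lies strictly to the left of the
directed line from `a` to `b`. -/
def detSide (a b p : ℝ × ℝ) : ℝ :=
  (b.1 - a.1) * (p.2 - a.2) - (b.2 - a.2) * (p.1 - a.1)

open Real Filter Topology

lemma detSide_swap (a b q : ℝ × ℝ) : detSide b a q = -detSide a b q := by
  unfold detSide
  ring

lemma collinear_of_detSide_eq_zero {a b c : ℝ × ℝ} (h : detSide a b c = 0) :
    Collinear ℝ ({a, b, c} : Set (ℝ × ℝ)) := by
  by_cases hab : a = b
  · subst hab
    simpa using collinear_pair ℝ a c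
  have hn : 0 < (b.1 - a.1) ^ 2 + (b.2 - a.2) ^ 2 := by
    by_contra! hle
    exact hab (Prod.ext (by nlinarith) (by nlinarith))
  -- `c` is the point of parameter `⟪c - a, b - a⟫ / ‖b - a‖²` on the line through `a` and `b`.
  set r := ((c.1 - a.1) * (b.1 - a.1) + (c.2 - a.2) * (b.2 - a.2)) /
    ((b.1 - a.1) ^ 2 + (b.2 - a.2) ^ 2)
  have hc : AffineMap.lineMap a b r = c := by
    unfold detSide at h
    rw [AffineMap.lineMap_apply]
    ext <;> simp only [vsub_eq_sub, vadd_eq_add, Prod.fst_add, Prod.snd_add, Prod.smul_fst,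
      Prod.smul_snd, Prod.fst_sub, Prod.snd_sub, smul_eq_mul, r] <;> field_simp
    · linear_combination (b.2 - a.2) * h
    · linear_combination -(b.1 - a.1) * h
  have hperm : ({a, b, c} : Set (ℝ × ℝ)) = {c, a, b} := by
    ext
    simp only [Set.mem_insert_iff, Set.mem_singleton_iff]
    tauto
  rw [hperm, ← hc]
  exact collinear_insert_of_mem_affineSpan_pair (AffineMap.lineMap_mem_affineSpan_pair r a b)

namespace InGeneralPosition

variable {S0 S1 : Set (ℝ × ℝ)}

lemma symm (h : InGeneralPosition S0 S1) : InGeneralPosition S1 S0 := by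
  unfold InGeneralPosition at h ⊢
  rwa [Set.inter_comm, Set.union_comm]

lemma ne {a b : ℝ × ℝ} (h : InGeneralPosition S0 S1) (ha : a ∈ S0) (hb : b ∈ S1) : a ≠ b := by
  rintro rfl
  exact (Set.eq_empty_iff_forall_notMem.1 h.1) a ⟨ha, hb⟩

lemma detSide_ne_zero {a b c : ℝ × ℝ} (h : InGeneralPosition S0 S1) (ha : a ∈ S0 ∪ S1)
    (hb : b ∈ S0 ∪ S1) (hc : c ∈ S0 ∪ S1) (hab : a ≠ b) (hac : a ≠ c) (hbc : b ≠ c) :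
    detSide a b c ≠ 0 := fun h0 =>
  h.2 a ha b hb c hc hab hac hbc (collinear_of_detSide_eq_zero h0)

end InGeneralPosition

noncomputable def dirHeight (θ : ℝ) (p : ℝ × ℝ) : ℝ :=
  cos θ * p.1 + sin θ * p.2

lemma continuous_dirHeight (p : ℝ × ℝ) : Continuous fun θ => dirHeight θ p := by
  unfold dirHeight
  fun_prop

lemma dirHeight_periodic (p : ℝ × ℝ) : Function.Periodic (fun θ => dirHeight θ p) (2 * π) :=
  fun θ => by simp only [dirHeight, cos_add_two_pi, sin_add_two_pi]

lemma dirHeight_add (θ φ : ℝ) (p : ℝ × ℝ) :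
    dirHeight (θ + φ) p = cos φ * dirHeight θ p + sin φ * dirHeight (θ + π / 2) p := by
  simp only [dirHeight, cos_add, sin_add, cos_pi_div_two, sin_pi_div_two]
  ring

lemma eq_of_dirHeight_eq {θ : ℝ} {a b : ℝ × ℝ} (h : dirHeight θ a = dirHeight θ b)
    (h' : dirHeight (θ + π / 2) a = dirHeight (θ + π / 2) b) : a = b := by
  simp only [dirHeight, cos_add, sin_add, cos_pi_div_two, sin_pi_div_two] at h h'
  have hpy := sin_sq_add_cos_sq θ
  ext
  · linear_combination cos θ * h - sin θ * h' + (b.1 - a.1) * hpy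
  · linear_combination sin θ * h + cos θ * h' + (b.2 - a.2) * hpy

lemma detSide_eq_mul_of_dirHeight_eq {θ : ℝ} {a b : ℝ × ℝ} (h : dirHeight θ a = dirHeight θ b)
    (q : ℝ × ℝ) : detSide a b q =
      (dirHeight (θ + π / 2) b - dirHeight (θ + π / 2) a) * (dirHeight θ a - dirHeight θ q) := by
  simp only [dirHeight, cos_add, sin_add, cos_pi_div_two, sin_pi_div_two] at h ⊢
  unfold detSide
  linear_combination (sin θ * (q.1 - a.1) - cos θ * (q.2 - a.2)) * h -
    ((b.1 - a.1) * (q.2 - a.2) - (b.2 - a.2) * (q.1 - a.1)) * sin_sq_add_cos_sq θ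

lemma eventually_dirHeight_lt {θ : ℝ} {a b : ℝ × ℝ} (h : dirHeight θ a = dirHeight θ b)
    (h' : dirHeight (θ + π / 2) b < dirHeight (θ + π / 2) a) :
    ∀ᶠ x in 𝓝[>] θ, dirHeight x b < dirHeight x a := by
  filter_upwards [Ioo_mem_nhdsGT (by linarith [pi_pos] : θ < θ + π)] with x hx
  obtain ⟨φ, rfl⟩ : ∃ φ, x = θ + φ := ⟨x - θ, by ring⟩
  have hsin : 0 < sin φ := sin_pos_of_pos_of_lt_pi (by linarith [hx.1]) (by linarith [hx.2])
  rw [dirHeight_add θ φ a, dirHeight_add θ φ b, h]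
  nlinarith

lemma exists_nonneg_mul_dirHeight (f : StrongDual ℝ (ℝ × ℝ)) :
    ∃ θ, ∃ r, 0 ≤ r ∧ ∀ p, f p = r * dirHeight θ p := by
  set z : ℂ := ⟨f (1, 0), f (0, 1)⟩
  refine ⟨z.arg, ‖z‖, norm_nonneg z, fun p => ?_⟩
  have hp : p = p.1 • ((1 : ℝ), (0 : ℝ)) + p.2 • ((0 : ℝ), (1 : ℝ)) := by
    ext <;> simp
  rw [hp, map_add, map_smul, map_smul, smul_eq_mul, smul_eq_mul, dirHeight, mul_add,
    ← mul_assoc, ← mul_assoc, Complex.norm_mul_cos_arg, Complex.norm_mul_sin_arg]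
  simp [z, mul_comm]

theorem exists_strongDual_lt_of_not_convexHull_subset {E : Type*} [NormedAddCommGroup E]
    [NormedSpace ℝ E] {A B : Set E} (hB : B.Finite) (h : ¬ convexHull ℝ A ⊆ convexHull ℝ B) :
    ∃ f : StrongDual ℝ E, ∃ a ∈ A, ∀ p ∈ B, f p < f a := by
  obtain ⟨x, hxA, hxB⟩ := Set.not_subset.1 h
  obtain ⟨f, u, hfB, hux⟩ := geometric_hahn_banach_closed_point (convex_convexHull ℝ B)
    (hB.isCompact_convexHull (𝕜 := ℝ)).isClosed hxB
  obtain ⟨a, ha, hxa⟩ := (f.toLinearMap.convexOn convex_univ).exists_ge_of_mem_convexHull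
    (Set.subset_univ A) hxA
  exact ⟨f, a, ha, fun p hp => (hfB p (subset_convexHull ℝ B hp)).trans (hux.trans_le hxa)⟩

lemma exists_dirHeight_lt_of_not_convexHull_subset {A B : Set (ℝ × ℝ)} (hB : B.Finite)
    (h : ¬ convexHull ℝ A ⊆ convexHull ℝ B) :
    ∃ θ, ∃ a ∈ A, ∀ p ∈ B, dirHeight θ p < dirHeight θ a := by
  obtain ⟨f, a, ha, hlt⟩ := exists_strongDual_lt_of_not_convexHull_subset hB h
  obtain ⟨θ, r, hr, hf⟩ := exists_nonneg_mul_dirHeight f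
  refine ⟨θ, a, ha, fun p hp => ?_⟩
  have := hlt p hp
  rw [hf, hf] at this
  exact lt_of_mul_lt_mul_left this hr

noncomputable def dirSupport (S : Finset (ℝ × ℝ)) (hS : S.Nonempty) (θ : ℝ) : ℝ :=
  S.sup' hS fun p => dirHeight θ p

section dirSupport

variable {S : Finset (ℝ × ℝ)} (hS : S.Nonempty)

lemma continuous_dirSupport : Continuous (dirSupport S hS) :=
  Continuous.finset_sup'_apply hS fun p _ => continuous_dirHeight p

lemma dirSupport_periodic : Function.Periodic (dirSupport S hS) (2 * π) := fun θ =>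
  Finset.sup'_congr hS rfl fun p _ => dirHeight_periodic p θ

lemma dirHeight_le_dirSupport {p : ℝ × ℝ} (hp : p ∈ S) (θ : ℝ) :
    dirHeight θ p ≤ dirSupport S hS θ :=
  Finset.le_sup' (fun p => dirHeight θ p) hp

lemma exists_dirHeight_eq_dirSupport (θ : ℝ) : ∃ p ∈ S, dirHeight θ p = dirSupport S hS θ := by
  obtain ⟨p, hp, h⟩ := Finset.exists_mem_eq_sup' hS fun p => dirHeight θ p
  exact ⟨p, hp, h.symm⟩

lemma dirSupport_lt_iff {θ c : ℝ} : dirSupport S hS θ < c ↔ ∀ p ∈ S, dirHeight θ p < c :=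
  Finset.sup'_lt_iff hS

end dirSupport

lemma exists_dirSupport_lt_of_not_convexHull_subset {A B : Finset (ℝ × ℝ)} (hA : A.Nonempty)
    (hB : B.Nonempty) (h : ¬ convexHull ℝ (A : Set (ℝ × ℝ)) ⊆ convexHull ℝ ↑B) :
    ∃ θ, dirSupport B hB θ < dirSupport A hA θ := by
  obtain ⟨θ, a, ha, hlt⟩ := exists_dirHeight_lt_of_not_convexHull_subset B.finite_toSet h
  exact ⟨θ, ((dirSupport_lt_iff hB).2 hlt).trans_le (dirHeight_le_dirSupport hA ha θ)⟩

theorem Continuous.exists_eq_zero_eventually_neg {f : ℝ → ℝ} (hf : Continuous f) {a b : ℝ}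
    (hab : a ≤ b) (ha : 0 ≤ f a) (hb : f b < 0) : ∃ c, f c = 0 ∧ ∀ᶠ x in 𝓝[>] c, f x < 0 := by
  set Z := Set.Icc a b ∩ {x | 0 ≤ f x}
  have hZ : IsCompact Z := isCompact_Icc.inter_right (isClosed_le continuous_const hf)
  have hcZ : sSup Z ∈ Z := hZ.sSup_mem ⟨a, ⟨le_rfl, hab⟩, ha⟩
  set c := sSup Z
  have hcb : c < b := lt_of_le_of_ne hcZ.1.2 fun h => hb.not_ge (h ▸ hcZ.2)
  have hneg : ∀ᶠ x in 𝓝[>] c, f x < 0 := by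
    filter_upwards [Ioo_mem_nhdsGT hcb] with x hx
    by_contra! hfx
    exact hx.1.not_ge (le_csSup hZ.bddAbove ⟨⟨hcZ.1.1.trans hx.1.le, hx.2.le⟩, hfx⟩)
  have hle : f c ≤ 0 :=
    le_of_tendsto (hf.continuousAt.tendsto.mono_left nhdsWithin_le_nhds)
      (hneg.mono fun _ => le_of_lt)
  exact ⟨c, le_antisymm hle hcZ.2, hneg⟩

theorem Function.Periodic.exists_eq_zero_eventually_neg {f : ℝ → ℝ} {T : ℝ}
    (hper : Function.Periodic f T) (hT : 0 < T) (hf : Continuous f) {a b : ℝ} (ha : 0 ≤ f a)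
    (hb : f b < 0) : ∃ c, f c = 0 ∧ ∀ᶠ x in 𝓝[>] c, f x < 0 := by
  obtain ⟨b', hb', hfb⟩ := hper.exists_mem_Ico hT b a
  exact hf.exists_eq_zero_eventually_neg hb'.1 ha (hfb ▸ hb)

lemma eventually_dirSupport_lt_dirHeight {S : Finset (ℝ × ℝ)} (hS : S.Nonempty) {θ : ℝ}
    {a b : ℝ × ℝ} (hab : dirHeight θ a = dirHeight θ b)
    (hperp : dirHeight (θ + π / 2) b < dirHeight (θ + π / 2) a)
    (huniq : ∀ p ∈ S, p ≠ b → dirHeight θ p < dirHeight θ a) :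
    ∀ᶠ x in 𝓝[>] θ, dirSupport S hS x < dirHeight x a := by
  have hbelow : ∀ p ∈ S, ∀ᶠ x in 𝓝[>] θ, dirHeight x p < dirHeight x a := by
    intro p hp
    by_cases hpb : p = b
    · exact hpb ▸ eventually_dirHeight_lt hab hperp
    · exact nhdsWithin_le_nhds ((continuous_dirHeight p).continuousAt.eventually_lt
        (continuous_dirHeight a).continuousAt (huniq p hp hpb))
  filter_upwards [(Finset.eventually_all S).2 hbelow] with x hx
  exact (dirSupport_lt_iff hS).2 hx

lemma exists_left_tangent_of_crossing {S0 S1 : Finset (ℝ × ℝ)}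
    (hgen : InGeneralPosition ↑S0 ↑S1) (h0 : S0.Nonempty) (h1 : S1.Nonempty) {θ : ℝ}
    (heq : dirSupport S0 h0 θ = dirSupport S1 h1 θ)
    (hneg : ∀ᶠ x in 𝓝[>] θ, dirSupport S0 h0 x < dirSupport S1 h1 x) :
    ∃ a ∈ S0, ∃ b ∈ S1, ∀ q ∈ (↑S0 ∪ ↑S1 : Set (ℝ × ℝ)), 0 ≤ detSide a b q := by
  obtain ⟨a, ha, hamax⟩ := exists_dirHeight_eq_dirSupport h0 θ
  obtain ⟨b, hb, hbmax⟩ := exists_dirHeight_eq_dirSupport h1 θ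
  have hab : dirHeight θ a = dirHeight θ b := by rw [hamax, hbmax, heq]
  have hle : ∀ q ∈ (↑S0 ∪ ↑S1 : Set (ℝ × ℝ)), dirHeight θ q ≤ dirHeight θ a := by
    rintro q (hq | hq)
    · exact hamax ▸ dirHeight_le_dirSupport h0 hq θ
    · exact hab ▸ hbmax ▸ dirHeight_le_dirSupport h1 hq θ
  have hbuniq : ∀ p ∈ S1, p ≠ b → dirHeight θ p < dirHeight θ a := by
    intro p hp hpb
    refine lt_of_le_of_ne (hle p (.inr hp)) fun hpa => ?_
    refine hgen.detSide_ne_zero (.inl ha) (.inr hb) (.inr hp) (hgen.ne ha hb) (hgen.ne ha hp)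
      (Ne.symm hpb) ?_
    rw [detSide_eq_mul_of_dirHeight_eq hab, hpa, sub_self, mul_zero]
  have hperp : dirHeight (θ + π / 2) a < dirHeight (θ + π / 2) b := by
    rcases lt_trichotomy (dirHeight (θ + π / 2) a) (dirHeight (θ + π / 2) b) with h | h | h
    · exact h
    · exact absurd (eq_of_dirHeight_eq hab h) (hgen.ne ha hb)
    · obtain ⟨x, hx, hx'⟩ :=
        (hneg.and (eventually_dirSupport_lt_dirHeight h1 hab h hbuniq)).exists
      exact absurd (dirHeight_le_dirSupport h0 ha x) (hx.trans hx').not_ge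
  refine ⟨a, ha, b, hb, fun q hq => ?_⟩
  rw [detSide_eq_mul_of_dirHeight_eq hab]
  exact mul_nonneg (sub_nonneg.2 hperp.le) (sub_nonneg.2 (hle q hq))

theorem exists_left_tangent {S0 S1 : Finset (ℝ × ℝ)} (hgen : InGeneralPosition ↑S0 ↑S1)
    (hn01 : ¬ convexHull ℝ (S0 : Set (ℝ × ℝ)) ⊆ convexHull ℝ ↑S1)
    (hn10 : ¬ convexHull ℝ (S1 : Set (ℝ × ℝ)) ⊆ convexHull ℝ ↑S0) :
    ∃ a ∈ S0, ∃ b ∈ S1, ∀ q ∈ (↑S0 ∪ ↑S1 : Set (ℝ × ℝ)), 0 ≤ detSide a b q := by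
  have h0 : S0.Nonempty := by
    simpa using convexHull_nonempty_iff.1
      ((Set.nonempty_of_not_subset hn01).mono Set.sdiff_subset)
  have h1 : S1.Nonempty := by
    simpa using convexHull_nonempty_iff.1
      ((Set.nonempty_of_not_subset hn10).mono Set.sdiff_subset)
  obtain ⟨θ0, hθ0⟩ := exists_dirSupport_lt_of_not_convexHull_subset h0 h1 hn01
  obtain ⟨θ1, hθ1⟩ := exists_dirSupport_lt_of_not_convexHull_subset h1 h0 hn10
  obtain ⟨θ, hzero, hneg⟩ := ((dirSupport_periodic h0).sub (dirSupport_periodic h1))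
    |>.exists_eq_zero_eventually_neg two_pi_pos
      ((continuous_dirSupport h0).sub (continuous_dirSupport h1))
      (sub_nonneg.2 hθ0.le) (sub_neg.2 hθ1)
  exact exists_left_tangent_of_crossing hgen h0 h1 (sub_eq_zero.1 hzero)
    (hneg.mono fun _ => sub_neg.1)

lemma Set.exists_mem_ne_ne_of_three_le_ncard {α : Type*} {s : Set α} (hs : 3 ≤ s.ncard)
    (a b : α) : ∃ q ∈ s, q ≠ a ∧ q ≠ b := by
  by_contra! h
  have hsub : s ⊆ {a, b} := fun q hq => by
    simp only [Set.mem_insert_iff, Set.mem_singleton_iff]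
    tauto
  have hle := Set.ncard_le_ncard hsub (Set.toFinite _)
  have hpair := Set.ncard_insert_le a {b}
  rw [Set.ncard_singleton] at hpair
  omega

theorem exists_two_outer_common_tangents_general (S0 S1 : Set (ℝ × ℝ))
    (h0fin : S0.Finite) (h1fin : S1.Finite)
    (hgen : InGeneralPosition S0 S1)
    (hcard : 3 ≤ (S0 ∪ S1).ncard)
    (hn01 : ¬ convexHull ℝ S0 ⊆ convexHull ℝ S1)
    (hn10 : ¬ convexHull ℝ S1 ⊆ convexHull ℝ S0) :
    ∃ r0 ∈ S0, ∃ r1 ∈ S1, ∃ l0 ∈ S0, ∃ l1 ∈ S1,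
      (∀ q ∈ S0 ∪ S1, detSide r0 r1 q ≤ 0) ∧
      (∀ q ∈ S0 ∪ S1, 0 ≤ detSide l0 l1 q) ∧
      (r0, r1) ≠ (l0, l1) := by
  lift S0 to Finset (ℝ × ℝ) using h0fin
  lift S1 to Finset (ℝ × ℝ) using h1fin
  obtain ⟨l0, hl0, l1, hl1, hleft⟩ := exists_left_tangent hgen hn01 hn10
  obtain ⟨r1, hr1, r0, hr0, hright⟩ := exists_left_tangent hgen.symm hn10 hn01
  have hright' : ∀ q ∈ (↑S0 ∪ ↑S1 : Set (ℝ × ℝ)), detSide r0 r1 q ≤ 0 := fun q hq => by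
    have := hright q (Set.union_comm _ _ ▸ hq)
    rwa [detSide_swap, neg_nonneg] at this
  refine ⟨r0, hr0, r1, hr1, l0, hl0, l1, hl1, hright', hleft, ?_⟩
  intro heq
  obtain ⟨rfl, rfl⟩ := Prod.mk.inj heq
  obtain ⟨q, hq, hq0, hq1⟩ := Set.exists_mem_ne_ne_of_three_le_ncard hcard r0 r1
  exact hgen.detSide_ne_zero (.inl hr0) (.inr hr1) hq (hgen.ne hr0 hr1) hq0.symm hq1.symm
    (le_antisymm (hright' q hq) (hleft q hq))

/-- If `S0` and `S1` are nonempty finite sets in general position,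
`S0 ∪ S1` has at least three elements, and neither convex hull contains the
other, then there are two distinct outer common tangents, given by pairs of
points `(r0, r1)` and `(ℓ0, ℓ1)` with `r0, ℓ0 ∈ S0` and `r1, ℓ1 ∈ S1`:
all of `S0 ∪ S1` lies weakly to the right of the directed line from `r0` to
`r1`, and weakly to the left of the directed line from `ℓ0` to `ℓ1`. -/
theorem exists_two_outer_common_tangents (S0 S1 : Set (ℝ × ℝ))
    (h0fin : S0.Finite) (h1fin : S1.Finite)
    (h0ne : S0.Nonempty) (h1ne : S1.Nonempty)
    (hgen : InGeneralPosition S0 S1)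
    (hcard : 3 ≤ (S0 ∪ S1).ncard)
    (hn01 : ¬ convexHull ℝ S0 ⊆ convexHull ℝ S1)
    (hn10 : ¬ convexHull ℝ S1 ⊆ convexHull ℝ S0) :
    ∃ r0 ∈ S0, ∃ r1 ∈ S1, ∃ l0 ∈ S0, ∃ l1 ∈ S1,
      (∀ q ∈ S0 ∪ S1, detSide r0 r1 q ≤ 0) ∧
      (∀ q ∈ S0 ∪ S1, 0 ≤ detSide l0 l1 q) ∧
      (r0, r1) ≠ (l0, l1) :=
  exists_two_outer_common_tangents_general S0 S1 h0fin h1fin hgen hcard hn01 hn10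
end

section
/- Let S0 and S1 be nonempty finite subsets of ℝ² in general position such that S0 ∪ S1 has at least 3 elements and the convex hulls of S0 and S1 are disjoint. Then there exist x ∈ S0 and y ∈ S1 such that every point of S0 lies weakly to the left and every point of S1 lies weakly to the right of the directed line from x to y, and there exist x' ∈ S0 and y' ∈ S1 such that every point of S0 lies weakly to the right and every point of S1 lies weakly to the left of the directed line from x' to y'; moreover (x, y) ≠ (x', y'), so the two corresponding tangent lines are distinct. -/
theorem exists_dual_lt_of_disjoint_convexHull {E : Type*} [TopologicalSpace E] [AddCommGroup E]
    [Module ℝ E] [IsTopologicalAddGroup E] [ContinuousSMul ℝ E] [LocallyConvexSpace ℝ E]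
    [T2Space E] {S0 S1 : Set E} (h0 : S0.Finite) (h1 : S1.Finite)
    (hdisj : Disjoint (convexHull ℝ S0) (convexHull ℝ S1)) :
    ∃ f : StrongDual ℝ E, ∀ x ∈ S0, ∀ y ∈ S1, f x < f y := by
  obtain ⟨f, u, v, hfu, huv, hfv⟩ :=
    geometric_hahn_banach_compact_closed (convex_convexHull ℝ S0) (h0.isCompact_convexHull ℝ)
      (convex_convexHull ℝ S1) (h1.isClosed_convexHull ℝ) hdisj
  exact ⟨f, fun x hx y hy ↦ by
    linarith [hfu x (subset_convexHull ℝ S0 hx), hfv y (subset_convexHull ℝ S1 hy)]⟩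

namespace Plane

def dot (u v : ℝ × ℝ) : ℝ := u.1 * v.1 + u.2 * v.2

def cross (u v : ℝ × ℝ) : ℝ := u.1 * v.2 - u.2 * v.1

noncomputable def tanAngle (w d : ℝ × ℝ) : ℝ := cross w d / dot w d

theorem dot_self_pos {u : ℝ × ℝ} (hu : u ≠ 0) : 0 < dot u u := by
  obtain h | h : u.1 ≠ 0 ∨ u.2 ≠ 0 := by
    contrapose! hu
    exact Prod.ext hu.1 hu.2
  all_goals unfold dot
  · nlinarith [mul_self_pos.2 h, mul_self_nonneg u.2]
  · nlinarith [mul_self_pos.2 h, mul_self_nonneg u.1]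

theorem cross_swap (u v : ℝ × ℝ) : cross v u = -cross u v := by
  simp only [cross]; ring

theorem cross_sub_sub_eq_detSide (x y q : ℝ × ℝ) : cross (y - q) (y - x) = detSide x y q := by
  simp only [cross, detSide, Prod.fst_sub, Prod.snd_sub]; ring

theorem cross_sub_sub_eq_neg_detSide (x y q : ℝ × ℝ) :
    cross (q - x) (y - x) = -detSide x y q := by
  simp only [cross, detSide, Prod.fst_sub, Prod.snd_sub]; ring

theorem tanAngle_le_tanAngle_iff {w d e : ℝ × ℝ} (hd : 0 < dot w d) (he : 0 < dot w e) :
    tanAngle w e ≤ tanAngle w d ↔ 0 ≤ cross e d := by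
  have hw : 0 < dot w w := dot_self_pos (by rintro rfl; simp [dot] at hd)
  have lagrange : cross w d * dot w e - cross w e * dot w d = dot w w * cross e d := by
    simp only [cross, dot]; ring
  rw [tanAngle, tanAngle, div_le_div_iff₀ he hd, ← sub_nonneg, lagrange,
    mul_nonneg_iff_of_pos_left hw]

theorem exists_dot_pos_of_disjoint_convexHull {S0 S1 : Set (ℝ × ℝ)} (h0 : S0.Finite)
    (h1 : S1.Finite) (hdisj : Disjoint (convexHull ℝ S0) (convexHull ℝ S1)) :
    ∃ w : ℝ × ℝ, ∀ x ∈ S0, ∀ y ∈ S1, 0 < dot w (y - x) := by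
  obtain ⟨f, hf⟩ := exists_dual_lt_of_disjoint_convexHull h0 h1 hdisj
  have hf_apply (p : ℝ × ℝ) : f p = dot (f (1, 0), f (0, 1)) p := by
    have hp : p = p.1 • ((1 : ℝ), (0 : ℝ)) + p.2 • ((0 : ℝ), (1 : ℝ)) := by ext <;> simp
    conv_lhs => rw [hp]
    simp only [map_add, map_smul, smul_eq_mul, dot]; ring
  refine ⟨(f (1, 0), f (0, 1)), fun x hx y hy ↦ ?_⟩
  rw [← hf_apply, map_sub, sub_pos]
  exact hf x hx y hy

section Tangents

variable {S0 S1 : Set (ℝ × ℝ)} {w x y : ℝ × ℝ}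

theorem separatesLeftRight_of_isMaxOn (hw : ∀ x ∈ S0, ∀ y ∈ S1, 0 < dot w (y - x))
    (hx : x ∈ S0) (hy : y ∈ S1)
    (hmax : IsMaxOn (fun p : (ℝ × ℝ) × (ℝ × ℝ) ↦ tanAngle w (p.2 - p.1)) (S0 ×ˢ S1) (x, y)) :
    (∀ q ∈ S0, 0 ≤ detSide x y q) ∧ (∀ q ∈ S1, detSide x y q ≤ 0) := by
  refine ⟨fun q hq ↦ ?_, fun q hq ↦ ?_⟩
  · rw [← cross_sub_sub_eq_detSide, ← tanAngle_le_tanAngle_iff (hw x hx y hy) (hw q hq y hy)]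
    exact hmax (Set.mk_mem_prod hq hy)
  · rw [← neg_nonneg, ← cross_sub_sub_eq_neg_detSide,
      ← tanAngle_le_tanAngle_iff (hw x hx y hy) (hw x hx q hq)]
    exact hmax (Set.mk_mem_prod hx hq)

theorem separatesRightLeft_of_isMinOn (hw : ∀ x ∈ S0, ∀ y ∈ S1, 0 < dot w (y - x))
    (hx : x ∈ S0) (hy : y ∈ S1)
    (hmin : IsMinOn (fun p : (ℝ × ℝ) × (ℝ × ℝ) ↦ tanAngle w (p.2 - p.1)) (S0 ×ˢ S1) (x, y)) :
    (∀ q ∈ S0, detSide x y q ≤ 0) ∧ (∀ q ∈ S1, 0 ≤ detSide x y q) := by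
  refine ⟨fun q hq ↦ ?_, fun q hq ↦ ?_⟩
  · rw [← neg_nonneg, ← cross_sub_sub_eq_detSide, ← cross_swap,
      ← tanAngle_le_tanAngle_iff (hw q hq y hy) (hw x hx y hy)]
    exact hmin (Set.mk_mem_prod hq hy)
  · rw [← neg_neg (detSide x y q), ← cross_sub_sub_eq_neg_detSide, ← cross_swap,
      ← tanAngle_le_tanAngle_iff (hw x hx q hq) (hw x hx y hy)]
    exact hmin (Set.mk_mem_prod hx hq)

end Tangents

theorem collinear_of_detSide_eq_zero {x y q : ℝ × ℝ} (hxy : x ≠ y) (h : detSide x y q = 0) :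
    Collinear ℝ ({x, y, q} : Set (ℝ × ℝ)) := by
  have hn : dot (y - x) (y - x) ≠ 0 := (dot_self_pos (sub_ne_zero.2 hxy.symm)).ne'
  rw [collinear_iff_of_mem (Set.mem_insert x _)]
  refine ⟨y - x, ?_⟩
  rintro p (rfl | rfl | rfl)
  · exact ⟨0, by simp⟩
  · exact ⟨1, by simp⟩
  · refine ⟨dot (y - x) (p - x) / dot (y - x) (y - x), ?_⟩
    ext <;> simp only [vadd_eq_add, Prod.fst_add, Prod.snd_add, Prod.smul_fst, Prod.smul_snd,
      smul_eq_mul] <;> rw [← sub_eq_iff_eq_add, div_mul_eq_mul_div, eq_div_iff hn] <;>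
      simp only [dot, detSide, Prod.fst_sub, Prod.snd_sub] at h ⊢
    · linear_combination -(y.2 - x.2) * h
    · linear_combination (y.1 - x.1) * h

theorem _root_.InGeneralPosition.exists_detSide_ne_zero {S0 S1 : Set (ℝ × ℝ)}
    (hgen : InGeneralPosition S0 S1) (hcard : 3 ≤ (S0 ∪ S1).ncard) {x y : ℝ × ℝ} (hx : x ∈ S0)
    (hy : y ∈ S1) : ∃ q ∈ S0 ∪ S1, detSide x y q ≠ 0 := by
  have hxy : x ≠ y := by
    rintro rfl
    exact (hgen.1 ▸ (⟨hx, hy⟩ : x ∈ S0 ∩ S1) : x ∈ (∅ : Set (ℝ × ℝ)))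
  obtain ⟨q, hq, hqxy⟩ := Set.exists_mem_notMem_of_ncard_lt_ncard
    (s := {x, y}) (t := S0 ∪ S1) (by rw [Set.ncard_pair hxy]; omega)
  simp only [Set.mem_insert_iff, Set.mem_singleton_iff, not_or] at hqxy
  exact ⟨q, hq, fun h ↦ hgen.2 x (.inl hx) y (.inr hy) q hq hxy (Ne.symm hqxy.1) (Ne.symm hqxy.2)
    (collinear_of_detSide_eq_zero hxy h)⟩

end Plane

/-- If `S0` and `S1` are nonempty finite sets in general position, `S0 ∪ S1`
has at least three elements, and the convex hulls of `S0` and `S1` are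
disjoint, then there are two distinct separating common tangents, given by
pairs of points `(x, y)` and `(x', y')` with `x, x' ∈ S0` and `y, y' ∈ S1`:
`S0` lies weakly to the left and `S1` weakly to the right of the directed line
from `x` to `y`, while `S0` lies weakly to the right and `S1` weakly to the
left of the directed line from `x'` to `y'`. -/
theorem exists_two_separating_common_tangents (S0 S1 : Set (ℝ × ℝ))
    (h0fin : S0.Finite) (h1fin : S1.Finite)
    (h0ne : S0.Nonempty) (h1ne : S1.Nonempty)
    (hgen : InGeneralPosition S0 S1)
    (hcard : 3 ≤ (S0 ∪ S1).ncard)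
    (hdisj : Disjoint (convexHull ℝ S0) (convexHull ℝ S1)) :
    ∃ x ∈ S0, ∃ y ∈ S1, ∃ x' ∈ S0, ∃ y' ∈ S1,
      (∀ q ∈ S0, 0 ≤ detSide x y q) ∧ (∀ q ∈ S1, detSide x y q ≤ 0) ∧
      (∀ q ∈ S0, detSide x' y' q ≤ 0) ∧ (∀ q ∈ S1, 0 ≤ detSide x' y' q) ∧
      (x, y) ≠ (x', y') := by
  obtain ⟨w, hw⟩ := Plane.exists_dot_pos_of_disjoint_convexHull h0fin h1fin hdisj
  let angle : (ℝ × ℝ) × (ℝ × ℝ) → ℝ := fun p ↦ Plane.tanAngle w (p.2 - p.1)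
  obtain ⟨⟨x, y⟩, ⟨hx, hy⟩, hmax⟩ :=
    Set.exists_max_image (S0 ×ˢ S1) angle (h0fin.prod h1fin) (h0ne.prod h1ne)
  obtain ⟨⟨x', y'⟩, ⟨hx', hy'⟩, hmin⟩ :=
    Set.exists_min_image (S0 ×ˢ S1) angle (h0fin.prod h1fin) (h0ne.prod h1ne)
  obtain ⟨hleft0, hright1⟩ := Plane.separatesLeftRight_of_isMaxOn hw hx hy hmax
  obtain ⟨hright0, hleft1⟩ := Plane.separatesRightLeft_of_isMinOn hw hx' hy' hmin
  refine ⟨x, hx, y, hy, x', hx', y', hy', hleft0, hright1, hright0, hleft1, ?_⟩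
  rintro ⟨⟩
  obtain ⟨q, hq, hq0⟩ := hgen.exists_detSide_ne_zero hcard hx hy
  rcases hq with hq | hq
  · exact hq0 (le_antisymm (hright0 q hq) (hleft0 q hq))
  · exact hq0 (le_antisymm (hright1 q hq) (hleft1 q hq))
end

section
/- (Lemma 5.) Let a ≤ b be real numbers and let f be a function from ℝ to the nonempty compact subsets of ℝ². Assume: (1) the set of points t ∈ [a, b] at which f is not continuous within [a, b] is finite; (2) for every t ∈ (a, b] there exists a nonempty compact set L such that f(s) converges to L as s tends to t within [a, t), and f(t) ⊆ L; (3) for every t ∈ [a, b) there exists a nonempty compact set L such that f(s) converges to L as s tends to t within (t, b], and L ⊆ f(t); (4) for all c, d with a ≤ c ≤ d ≤ b, if f is continuous on [c, d] then f is monotonically decreasing on [c, d]. Then f is monotonically decreasing on all of [a, b]: for all s, t ∈ [a, b] with s ≤ t, one has f(t) ⊆ f(s). -/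
/-!
Induct on a finite set `S` containing the discontinuities. On a subinterval free of `S` the map
is continuous, hence antitone by assumption. A point `u ∈ S` inside `[s, t]` is crossed through
its one-sided limits: `f t ⊆ L⁺ ⊆ f u` and `f u ⊆ L⁻ ⊆ f s`, since both `K ⊆ C` (for closed `C`)
and `C ⊆ K` are closed conditions on `K` in the Hausdorff (= Vietoris) topology.
-/

open TopologicalSpace Filter Set Topology

namespace TopologicalSpace.NonemptyCompacts

variable {α : Type*} [TopologicalSpace α]

theorem isClosed_setOf_mem [T1Space α] (x : α) : IsClosed {K : NonemptyCompacts α | x ∈ K} := by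
  simpa using isClosed_inter_nonempty_of_isClosed (α := α) (isClosed_singleton (x := x))

instance [T2Space α] : ClosedIicTopology (NonemptyCompacts α) :=
  ⟨fun K => isClosed_subsets_of_isClosed K.isCompact.isClosed⟩

instance [T1Space α] : ClosedIciTopology (NonemptyCompacts α) :=
  ⟨fun K => by
    simpa only [Ici, ← SetLike.coe_subset_coe, subset_def, ofPred_forall, SetLike.mem_coe] using
      isClosed_biInter fun x (_ : x ∈ (K : Set α)) => isClosed_setOf_mem x⟩

end TopologicalSpace.NonemptyCompacts

section

variable {α β : Type*} [LinearOrder α] [TopologicalSpace α] [OrderTopology α] [DenselyOrdered α]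
  [Preorder β] [TopologicalSpace β] [ClosedIicTopology β] [ClosedIciTopology β]
  {f : α → β} {a b : α}

theorem antitoneOn_Icc_of_finite_discontinuities
    (hfin : {t ∈ Icc a b | ¬ ContinuousWithinAt f (Icc a b) t}.Finite)
    (hleft : ∀ t ∈ Ioc a b, ∃ L, Tendsto f (𝓝[<] t) (𝓝 L) ∧ f t ≤ L)
    (hright : ∀ t ∈ Ico a b, ∃ L, Tendsto f (𝓝[>] t) (𝓝 L) ∧ L ≤ f t)
    (hmono : ∀ c d, a ≤ c → c ≤ d → d ≤ b → ContinuousOn f (Icc c d) →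
      AntitoneOn f (Icc c d)) :
    AntitoneOn f (Icc a b) := by
  set D := {t ∈ Icc a b | ¬ ContinuousWithinAt f (Icc a b) t}
  suffices key : ∀ S : Set α, S.Finite → ∀ s t, a ≤ s → s ≤ t → t ≤ b →
      D ∩ Icc s t ⊆ S → f t ≤ f s from
    fun s hs t ht hst => key D hfin s t hs.1 hst ht.2 inter_subset_left
  intro S hS
  induction S, hS using Set.Finite.induction_on with
  | empty =>
    intro s t has hst htb hD
    have hcont : ContinuousOn f (Icc s t) := fun x hx =>
      (not_not.1 fun hx' => hD ⟨⟨⟨has.trans hx.1, hx.2.trans htb⟩, hx'⟩, hx⟩).mono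
        (Icc_subset_Icc has htb)
    exact hmono s t has hst htb hcont ⟨le_rfl, hst⟩ ⟨hst, le_rfl⟩ hst
  | @insert u S _ _ ih =>
    intro s t has hst htb hD
    by_cases hu : u ∈ Icc s t
    swap
    · exact ih s t has hst htb fun x hx =>
        (hD hx).resolve_left fun hxu => hu (hxu ▸ hx.2)
    have hDS : ∀ {s' t'}, s ≤ s' → t' ≤ t → u ∉ Icc s' t' → D ∩ Icc s' t' ⊆ S :=
      fun hs' ht' hu' x hx => (hD ⟨hx.1, Icc_subset_Icc hs' ht' hx.2⟩).resolve_left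
        fun hxu => hu' (hxu ▸ hx.2)
    have hright_le : f t ≤ f u := by
      rcases hu.2.eq_or_lt with rfl | hut
      · exact le_rfl
      obtain ⟨L, hL, hLu⟩ := hright u ⟨has.trans hu.1, hut.trans_le htb⟩
      have := nhdsGT_neBot_of_exists_gt ⟨t, hut⟩
      refine (ge_of_tendsto hL (mem_of_superset (Ioo_mem_nhdsGT hut) fun r hr => ?_)).trans hLu
      exact ih r t (has.trans (hu.1.trans hr.1.le)) hr.2.le htb
        (hDS (hu.1.trans hr.1.le) le_rfl fun h => hr.1.not_ge h.1)
    have hleft_le : f u ≤ f s := by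
      rcases hu.1.eq_or_lt with rfl | hsu
      · exact le_rfl
      obtain ⟨L, hL, huL⟩ := hleft u ⟨has.trans_lt hsu, hu.2.trans htb⟩
      have := nhdsLT_neBot_of_exists_lt ⟨s, hsu⟩
      refine huL.trans (le_of_tendsto hL (mem_of_superset (Ioo_mem_nhdsLT hsu) fun r hr => ?_))
      exact ih s r has hr.1.le (hr.2.le.trans (hu.2.trans htb))
        (hDS le_rfl (hr.2.le.trans hu.2) fun h => hr.2.not_ge h.2)
    exact hright_le.trans hleft_le

end

theorem monotone_decreasing_of_piecewise_general (a b : ℝ)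
    (f : ℝ → NonemptyCompacts (ℝ × ℝ))
    (hfin : {t ∈ Set.Icc a b | ¬ ContinuousWithinAt f (Set.Icc a b) t}.Finite)
    (hleft : ∀ t ∈ Set.Ioc a b, ∃ L : NonemptyCompacts (ℝ × ℝ),
      Tendsto f (nhdsWithin t (Set.Ico a t)) (nhds L) ∧ (f t : Set (ℝ × ℝ)) ⊆ L)
    (hright : ∀ t ∈ Set.Ico a b, ∃ L : NonemptyCompacts (ℝ × ℝ),
      Tendsto f (nhdsWithin t (Set.Ioc t b)) (nhds L) ∧ (L : Set (ℝ × ℝ)) ⊆ f t)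
    (hmono : ∀ c d, a ≤ c → c ≤ d → d ≤ b → ContinuousOn f (Set.Icc c d) →
      ∀ s ∈ Set.Icc c d, ∀ t ∈ Set.Icc c d, s ≤ t →
        (f t : Set (ℝ × ℝ)) ⊆ (f s : Set (ℝ × ℝ))) :
    ∀ s ∈ Set.Icc a b, ∀ t ∈ Set.Icc a b, s ≤ t →
      (f t : Set (ℝ × ℝ)) ⊆ (f s : Set (ℝ × ℝ)) :=
  antitoneOn_Icc_of_finite_discontinuities (f := f) hfin
    (fun t ht => by rw [← nhdsWithin_Ico_eq_nhdsLT ht.1]; exact hleft t ht)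
    (fun t ht => by rw [← nhdsWithin_Ioc_eq_nhdsGT ht.2]; exact hright t ht)
    hmono

/-- **Lemma 5.** Let `f` be a map from `ℝ` to the space of nonempty compact
subsets of `ℝ²` (equipped with the Hausdorff metric) and let `a ≤ b`.
Suppose that:
* `f` has only finitely many discontinuities within `[a, b]`;
* for every `t ∈ (a, b]`, `f` converges to some limit `L` from the left and
  `f t ⊆ L`;
* for every `t ∈ [a, b)`, `f` converges to some limit `L` from the right and
  `L ⊆ f t`;
* `f` is monotonically decreasing on every subinterval `[c, d] ⊆ [a, b]` on
  which it is continuous.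
Then `f` is monotonically decreasing on all of `[a, b]`. -/
theorem monotone_decreasing_of_piecewise (a b : ℝ) (hab : a ≤ b)
    (f : ℝ → NonemptyCompacts (ℝ × ℝ))
    (hfin : {t ∈ Set.Icc a b | ¬ ContinuousWithinAt f (Set.Icc a b) t}.Finite)
    (hleft : ∀ t ∈ Set.Ioc a b, ∃ L : NonemptyCompacts (ℝ × ℝ),
      Tendsto f (nhdsWithin t (Set.Ico a t)) (nhds L) ∧ (f t : Set (ℝ × ℝ)) ⊆ L)
    (hright : ∀ t ∈ Set.Ico a b, ∃ L : NonemptyCompacts (ℝ × ℝ),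
      Tendsto f (nhdsWithin t (Set.Ioc t b)) (nhds L) ∧ (L : Set (ℝ × ℝ)) ⊆ f t)
    (hmono : ∀ c d, a ≤ c → c ≤ d → d ≤ b → ContinuousOn f (Set.Icc c d) →
      ∀ s ∈ Set.Icc c d, ∀ t ∈ Set.Icc c d, s ≤ t →
        (f t : Set (ℝ × ℝ)) ⊆ (f s : Set (ℝ × ℝ))) :
    ∀ s ∈ Set.Icc a b, ∀ t ∈ Set.Icc a b, s ≤ t →
      (f t : Set (ℝ × ℝ)) ⊆ (f s : Set (ℝ × ℝ)) :=
  monotone_decreasing_of_piecewise_general a b f hfin hleft hright hmono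
end
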